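/- For every oriented cycle C on at least 3 vertices, mad_{χ⃗}(C) ≤ 2|V(C)| − 3: every digraph with dichromatic number at least 2|V(C)| − 3 contains a subdivision of C. -/

import Mathlib

noncomputable def outDeg {V : Type*} (D : V → V → Prop) (v : V) : ℕ := Nat.card {w // D v w}

noncomputable def inDeg {V : Type*} (D : V → V → Prop) (v : V) : ℕ := Nat.card {w // D w v}

/-- `D` contains a subdivision of `F`: branch vertices are given by an injective map `emb`,
and each arc of `F` is replaced by a directed path in `D` of length at least 1, the paths
being internally disjoint from each other and from the branch vertices. -/
def IsSubdivision {U : Type*} {V : Type*} (F : U → U → Prop) (D : V → V → Prop) : Prop :=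
  ∃ (emb : U → V) (len : U → U → ℕ) (p : U → U → ℕ → V),
    Function.Injective emb ∧
    (∀ u v, F u v → 1 ≤ len u v) ∧
    (∀ u v, F u v → p u v 0 = emb u ∧ p u v (len u v) = emb v) ∧
    (∀ u v, F u v → ∀ i < len u v, D (p u v i) (p u v (i+1))) ∧
    (∀ u v, F u v → ∀ i ≤ len u v, ∀ j ≤ len u v, p u v i = p u v j → i = j) ∧
    (∀ u v, F u v → ∀ i, 0 < i → i < len u v → ∀ w, p u v i ≠ emb w) ∧
    (∀ u v, F u v → ∀ u' v', F u' v' → (u, v) ≠ (u', v') →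
      ∀ i, 0 < i → i < len u v → ∀ j, 0 < j → j < len u' v' → p u v i ≠ p u' v' j)

/-- There is a closed directed walk of positive length all of whose vertices lie in `A`. -/
def HasCycleIn {V : Type*} (D : V → V → Prop) (A : Set V) : Prop :=
  ∃ (n : ℕ) (p : ℕ → V), 1 ≤ n ∧ p n = p 0 ∧ (∀ i < n, D (p i) (p (i+1))) ∧ (∀ i ≤ n, p i ∈ A)

/-- The dichromatic number: least `k` such that the vertices can be coloured with `k` colours
with every colour class inducing an acyclic subdigraph. -/
noncomputable def dichrom {V : Type*} (D : V → V → Prop) : ℕ :=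
  sInf {k : ℕ | ∃ c : V → Fin k, ∀ i : Fin k, ¬ HasCycleIn D {v | c v = i}}

/-- The oriented cycle on `n` vertices `0,…,n-1`, where the edge between `i` and `i+1`
(mod `n`) is directed forward if `σ i = true` and backward otherwise. -/
def orientedCycle (n : ℕ) (σ : ℕ → Bool) : Fin n → Fin n → Prop :=
  fun a b => ((a.val + 1) % n = b.val ∧ σ a.val = true) ∨
    ((b.val + 1) % n = a.val ∧ σ b.val = false)

/-!
If `σ` is constant the cycle is directed, and a digraph with no directed cycle of length at least
`n` is `(n - 1)`-dicolourable: in every set of vertices, the end of a longest directed path has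
fewer than `n - 1` out-neighbours, so vertices can be coloured greedily. Otherwise rotate the cycle
so that `0` is a 2-source; then `C - 0` is an oriented path `P` on `n - 1` vertices, and the same
greedy argument shows that a digraph without `P` is `(n - 2)`-dicolourable. Colouring each strong
component by the parity of the distance from a root together with a colour inside the level of
that distance uses `2n - 4` colours, so if `χ⃗(D) ≥ 2n - 3` some level `{v | dist(r, v) = j}`
contains `P`. Shortest paths from `r` to the two ends of `P` separate at their last common vertex
`z` and then stay disjoint, as both climb one level per arc; with `P` they form a subdivision of
`C` in which `z` is the image of the 2-source.
-/

section

variable {V : Type*} {D : V → V → Prop}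

section Walks

def HasWalk (D : V → V → Prop) (a b : V) (L : ℕ) : Prop :=
  ∃ p : ℕ → V, p 0 = a ∧ p L = b ∧ ∀ i < L, D (p i) (p (i + 1))

def Reaches (D : V → V → Prop) (a b : V) : Prop := ∃ L, HasWalk D a b L

lemma hasWalk_of_seq {p : ℕ → V} {s t : ℕ} (hst : s ≤ t)
    (h : ∀ i, s ≤ i → i < t → D (p i) (p (i + 1))) : HasWalk D (p s) (p t) (t - s) :=
  ⟨fun i => p (s + i), rfl, by simp only [Nat.add_sub_cancel' hst], fun i hi => by
    simpa only [← Nat.add_assoc] using h (s + i) (by omega) (by omega)⟩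

lemma HasWalk.single {a b : V} (h : D a b) : HasWalk D a b 1 :=
  ⟨fun i => if i = 0 then a else b, rfl, rfl, fun i hi => by
    simpa [show i = 0 by omega] using h⟩

lemma HasWalk.trans {a b c : V} {L M : ℕ} (hab : HasWalk D a b L) (hbc : HasWalk D b c M) :
    HasWalk D a c (L + M) := by
  obtain ⟨p, rfl, rfl, hp⟩ := hab
  obtain ⟨q, hq0, rfl, hq⟩ := hbc
  have hright : ∀ t, L ≤ t → (if t ≤ L then p t else q (t - L)) = q (t - L) := by
    intro t ht
    split_ifs with h
    · rw [show t = L by omega, Nat.sub_self, hq0]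
    · rfl
  refine ⟨fun t => if t ≤ L then p t else q (t - L), by simp, ?_, fun i hi => ?_⟩
  · dsimp only
    rw [hright _ (Nat.le_add_right L M), Nat.add_sub_cancel_left]
  · rcases Nat.lt_or_ge i L with h | h
    · simpa [h.le, Nat.succ_le_of_lt h] using hp i h
    · dsimp only
      rw [hright i h, hright (i + 1) (by omega), Nat.sub_add_comm h]
      exact hq _ (by omega)

lemma Reaches.refl (a : V) : Reaches D a a := ⟨0, fun _ => a, rfl, rfl, by simp⟩

lemma Reaches.trans {a b c : V} (hab : Reaches D a b) (hbc : Reaches D b c) : Reaches D a c :=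
  let ⟨_, hab⟩ := hab
  let ⟨_, hbc⟩ := hbc
  ⟨_, hab.trans hbc⟩

noncomputable def arcDist (D : V → V → Prop) (r v : V) : ℕ := sInf {L | HasWalk D r v L}

lemma arcDist_le {r v : V} {L : ℕ} (h : HasWalk D r v L) : arcDist D r v ≤ L := Nat.sInf_le h

lemma hasWalk_arcDist {r v : V} (h : Reaches D r v) : HasWalk D r v (arcDist D r v) :=
  Nat.sInf_mem h

lemma arcDist_le_succ {r u v : V} (hu : Reaches D r u) (huv : D u v) :
    arcDist D r v ≤ arcDist D r u + 1 :=
  arcDist_le ((hasWalk_arcDist hu).trans (.single huv))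

lemma arcDist_of_geodesic {r : V} {p : ℕ → V} {L : ℕ} (hp0 : p 0 = r)
    (harc : ∀ i < L, D (p i) (p (i + 1))) (hL : arcDist D r (p L) = L) {t : ℕ} (ht : t ≤ L) :
    arcDist D r (p t) = t := by
  subst hp0
  have hprefix := hasWalk_of_seq (p := p) (Nat.zero_le t) fun i _ hi => harc i (by omega)
  have hsuffix := hasWalk_of_seq (p := p) ht fun i _ hi => harc i hi
  rw [Nat.sub_zero] at hprefix
  have hle := arcDist_le hprefix
  have hge := arcDist_le ((hasWalk_arcDist ⟨t, hprefix⟩).trans hsuffix)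
  omega

end Walks

section Dicolouring

def DicolorableOn (D : V → V → Prop) (k : ℕ) (A : Set V) : Prop :=
  ∃ c : V → Fin k, ∀ i, ¬HasCycleIn D {v | v ∈ A ∧ c v = i}

lemma HasCycleIn.mono {A B : Set V} (hAB : A ⊆ B) : HasCycleIn D A → HasCycleIn D B
  | ⟨n, p, hn, hpn, harc, hA⟩ => ⟨n, p, hn, hpn, harc, fun i hi => hAB (hA i hi)⟩

lemma HasCycleIn.of_flip {A : Set V} : HasCycleIn (flip D) A → HasCycleIn D A := by
  rintro ⟨n, p, hn, hpn, harc, hA⟩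
  refine ⟨n, fun i => p (n - i), hn, by simp [hpn], fun i hi => ?_, fun i _ => hA _ (by omega)⟩
  have := harc (n - (i + 1)) (by omega)
  rwa [show n - (i + 1) + 1 = n - i by omega] at this

lemma DicolorableOn.flip {k : ℕ} {A : Set V} : DicolorableOn D k A → DicolorableOn (flip D) k A
  | ⟨c, hc⟩ => ⟨c, fun i h => hc i h.of_flip⟩

lemma dichrom_le_of_dicolorableOn_univ {k : ℕ} : DicolorableOn D k Set.univ → dichrom D ≤ k
  | ⟨c, hc⟩ => Nat.sInf_le ⟨c, fun i h => hc i (h.mono fun _ hv => ⟨trivial, hv⟩)⟩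

/-- Give `w` a colour missing from its out-neighbours in `A`: a monochromatic cycle through `w`
would leave it along an arc to one of them. -/
lemma DicolorableOn.of_diff_singleton [Finite V] (hD : Irreflexive D) {k : ℕ} {A : Set V} {w : V}
    (hw : {x | x ∈ A ∧ D w x}.ncard < k) (h : DicolorableOn D k (A \ {w})) :
    DicolorableOn D k A := by
  obtain ⟨c, hc⟩ := h
  obtain ⟨i₀, hi₀⟩ : ∃ i₀, i₀ ∉ c '' {x | x ∈ A ∧ D w x} := by
    by_contra! hall
    have := Set.ncard_image_le (f := c) (s := {x | x ∈ A ∧ D w x}) (Set.toFinite _)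
    rw [Set.eq_univ_of_forall hall, Set.ncard_univ, Nat.card_eq_fintype_card,
      Fintype.card_fin] at this
    omega
  classical
  refine ⟨Function.update c w i₀, fun i ⟨n, p, hn, hpn, harc, hcol⟩ => ?_⟩
  by_cases hon : ∃ t < n, p t = w
  · obtain ⟨t, ht, rfl⟩ := hon
    have hnext := hcol (t + 1) ht
    have hne : p (t + 1) ≠ p t := fun he => hD _ (he ▸ harc t ht)
    have hcolw : Function.update c (p t) i₀ (p t) = i := (hcol t ht.le).2
    rw [Function.update_self] at hcolw
    rw [Set.mem_ofPred_eq, Function.update_of_ne hne, ← hcolw] at hnext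
    exact hi₀ ⟨p (t + 1), ⟨hnext.1, harc t ht⟩, hnext.2⟩
  · push Not at hon
    have hne (t : ℕ) (ht : t ≤ n) : p t ≠ w := by
      rcases ht.lt_or_eq with ht | rfl
      exacts [hon t ht, hpn ▸ hon 0 (by omega)]
    refine hc i ⟨n, p, hn, hpn, harc, fun t ht => ?_⟩
    have := hcol t ht
    rw [Set.mem_ofPred_eq, Function.update_of_ne (hne t ht)] at this
    exact ⟨⟨this.1, hne t ht⟩, this.2⟩

def orientArc (D : V → V → Prop) : Bool → V → V → Prop
  | true => D
  | false => flip D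

lemma orientArc_irrefl (hD : Irreflexive D) (b : Bool) (x : V) : ¬orientArc D b x x := by
  cases b <;> exact hD x

lemma DicolorableOn.of_diff_singleton_orientArc [Finite V] (hD : Irreflexive D) {k : ℕ}
    {A : Set V} {w : V} (b : Bool) (hw : {x | x ∈ A ∧ orientArc D b w x}.ncard < k)
    (h : DicolorableOn D k (A \ {w})) : DicolorableOn D k A := by
  cases b
  · exact (h.flip.of_diff_singleton (D := _root_.flip D) (fun x => hD x) hw).flip
  · exact h.of_diff_singleton hD hw

lemma dicolorableOn_of_degenerate [Finite V] (hD : Irreflexive D) {k : ℕ} (hk : 0 < k)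
    {A : Set V} (h : ∀ B ⊆ A, B.Nonempty →
      ∃ w ∈ B, ∃ b, {x | x ∈ B ∧ orientArc D b w x}.ncard < k) :
    DicolorableOn D k A := by
  induction hA : A.ncard using Nat.strong_induction_on generalizing A with
  | _ N ih =>
    rcases A.eq_empty_or_nonempty with rfl | hne
    · exact ⟨fun _ => ⟨0, hk⟩, fun i ⟨_, p, _, _, _, hp⟩ => (hp 0 (Nat.zero_le _)).1⟩
    obtain ⟨w, hw, b, hdeg⟩ := h A le_rfl hne
    refine .of_diff_singleton_orientArc hD b hdeg (ih _ ?_ (fun B hB => h B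
      (hB.trans Set.sdiff_subset)) rfl)
    rw [← hA]
    exact Set.ncard_sdiff_singleton_lt_of_mem hw

end Dicolouring

section OrientedPaths

def IsOrientedPath (D : V → V → Prop) (τ : ℕ → Bool) (A : Set V) (m : ℕ) (v : ℕ → V) :
    Prop :=
  (∀ i < m, v i ∈ A) ∧ Set.InjOn v (Set.Iio m) ∧
    ∀ i, i + 1 < m → orientArc D (τ i) (v i) (v (i + 1))

variable {τ : ℕ → Bool}

lemma IsOrientedPath.mono {A B : Set V} {m m' : ℕ} {v : ℕ → V} (hAB : A ⊆ B) (hm : m' ≤ m)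
    (h : IsOrientedPath D τ A m v) : IsOrientedPath D τ B m' v :=
  ⟨fun i hi => hAB (h.1 i (by omega)), h.2.1.mono (Set.Iio_subset_Iio hm),
    fun i hi => h.2.2 i (by omega)⟩

lemma IsOrientedPath.extend {A : Set V} {m : ℕ} {v : ℕ → V} {x : V}
    (hv : IsOrientedPath D τ A (m + 1) v) (hx : x ∈ A) (hnew : ∀ j ≤ m, v j ≠ x)
    (harc : orientArc D (τ m) (v m) x) :
    IsOrientedPath D τ A (m + 2) (Function.update v (m + 1) x) := by
  classical
  obtain ⟨hA, hinj, hvarc⟩ := hv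
  have hval (i : ℕ) : Function.update v (m + 1) x i = if i = m + 1 then x else v i :=
    Function.update_apply ..
  refine ⟨fun i hi => ?_, fun i hi j hj hij => ?_, fun i hi => ?_⟩
  · rw [hval]
    split_ifs
    exacts [hx, hA i (by omega)]
  · simp only [Set.mem_Iio] at hi hj
    rw [hval, hval] at hij
    split_ifs at hij with hi' hj'
    · omega
    · exact absurd hij.symm (hnew j (by omega))
    · exact absurd hij (hnew i (by omega))
    · exact hinj (by simp; omega) (by simp; omega) hij
  · rw [hval, hval]
    rcases (show i = m ∨ i + 1 < m + 1 by omega) with rfl | h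
    · simpa using harc
    · simpa [show i ≠ m + 1 by omega, show i ≠ m by omega] using hvarc i h

lemma exists_maximal_isOrientedPath [Finite V] (hD : Irreflexive D) (τ : ℕ → Bool) {B : Set V}
    (hB : B.Nonempty) : ∃ ℓ v, IsOrientedPath D τ B (ℓ + 1) v ∧
      ∀ x ∈ B, orientArc D (τ ℓ) (v ℓ) x → ∃ j < ℓ, v j = x := by
  classical
  have hbound (ℓ : ℕ) (v : ℕ → V) (hv : IsOrientedPath D τ B (ℓ + 1) v) :
      ℓ ≤ Nat.card V := by
    have := Nat.card_le_card_of_injective (fun i : Fin (ℓ + 1) => v i) fun i j h =>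
      Fin.ext (hv.2.1 i.2 j.2 h)
    simp only [Nat.card_eq_fintype_card, Fintype.card_fin] at this
    omega
  obtain ⟨b, hb⟩ := hB
  have hsingle : ∃ v, IsOrientedPath D τ B (0 + 1) v :=
    ⟨fun _ => b, fun _ _ => hb, fun i hi j hj _ => by simp only [Set.mem_Iio] at hi hj; omega,
      fun i hi => by omega⟩
  set ℓ := Nat.findGreatest (fun ℓ => ∃ v, IsOrientedPath D τ B (ℓ + 1) v) (Nat.card V)
  obtain ⟨v, hv⟩ : ∃ v, IsOrientedPath D τ B (ℓ + 1) v :=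
    Nat.findGreatest_spec (P := fun ℓ => ∃ v, IsOrientedPath D τ B (ℓ + 1) v) (Nat.zero_le _)
      hsingle
  refine ⟨ℓ, v, hv, fun x hx harc => ?_⟩
  by_contra! hoff
  have hnew (j : ℕ) (hj : j ≤ ℓ) : v j ≠ x := by
    rcases hj.lt_or_eq with hj | rfl
    · exact hoff j hj
    · rintro rfl
      exact orientArc_irrefl hD _ _ harc
  have hext := hv.extend hx hnew harc
  have := Nat.le_findGreatest (P := fun ℓ => ∃ v, IsOrientedPath D τ B (ℓ + 1) v)
    (hbound _ _ hext) ⟨_, hext⟩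
  omega

lemma ncard_le_of_subset_image_Ico {S : Set V} {v : ℕ → V} {a b : ℕ}
    (h : S ⊆ v '' Set.Ico a b) : S.ncard ≤ b - a :=
  calc S.ncard ≤ (v '' Set.Ico a b).ncard := Set.ncard_le_ncard h ((Set.finite_Ico a b).image v)
    _ ≤ (Set.Ico a b).ncard := Set.ncard_image_le (Set.finite_Ico a b)
    _ = b - a := by rw [← Finset.coe_Ico, Set.ncard_coe_finset, Nat.card_Ico]

lemma dicolorableOn_of_forall_not_isOrientedPath [Finite V] (hD : Irreflexive D) {m : ℕ}
    (hm : 2 ≤ m) {A : Set V} (h : ∀ v, ¬IsOrientedPath D τ A m v) :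
    DicolorableOn D (m - 1) A := by
  refine dicolorableOn_of_degenerate hD (by omega) fun B hBA hB => ?_
  obtain ⟨ℓ, v, hv, hmax⟩ := exists_maximal_isOrientedPath hD τ hB
  have hℓ : ℓ + 1 < m := by
    by_contra! hle
    exact h v (hv.mono hBA hle)
  refine ⟨v ℓ, hv.1 ℓ (by omega), τ ℓ,
    (ncard_le_of_subset_image_Ico (v := v) (a := 0) (b := ℓ) ?_).trans_lt (by omega)⟩
  rintro x ⟨hx, harc⟩
  obtain ⟨j, hj, rfl⟩ := hmax x hx harc
  exact ⟨j, ⟨Nat.zero_le j, hj⟩, rfl⟩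

end OrientedPaths

section LongCycles

def HasLongCycle (D : V → V → Prop) (n : ℕ) : Prop :=
  ∃ L, ∃ q : ℕ → V, n ≤ L ∧ q L = q 0 ∧ (∀ i < L, D (q i) (q (i + 1))) ∧
    Set.InjOn q (Set.Iio L)

lemma IsOrientedPath.hasLongCycle {A : Set V} {ℓ j n : ℕ} {v : ℕ → V}
    (hv : IsOrientedPath D (fun _ => true) A (ℓ + 1) v) (hj : j < ℓ) (hback : D (v ℓ) (v j))
    (hn : n ≤ ℓ + 1 - j) : HasLongCycle D n := by
  refine ⟨ℓ + 1 - j, fun t => v (j + t % (ℓ + 1 - j)), hn, by simp, fun i hi => ?_,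
    fun a ha b hb hab => ?_⟩
  · rcases (show i + 1 < ℓ + 1 - j ∨ i + 1 = ℓ + 1 - j by omega) with h | h
    · simpa [Nat.mod_eq_of_lt hi, Nat.mod_eq_of_lt h, ← Nat.add_assoc, orientArc] using
        hv.2.2 (j + i) (by omega)
    · simpa [Nat.mod_eq_of_lt hi, h, show j + i = ℓ by omega] using hback
  · simp only [Set.mem_Iio] at ha hb
    simp only [Nat.mod_eq_of_lt ha, Nat.mod_eq_of_lt hb] at hab
    have := hv.2.1 (show j + a ∈ Set.Iio (ℓ + 1) by simp; omega) (by simp; omega) hab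
    omega

lemma dicolorableOn_univ_of_not_hasLongCycle [Finite V] (hD : Irreflexive D) {n : ℕ}
    (hn : 2 ≤ n) (h : ¬HasLongCycle D n) : DicolorableOn D (n - 1) Set.univ := by
  refine dicolorableOn_of_degenerate hD (by omega) fun B _ hB => ?_
  obtain ⟨ℓ, v, hv, hmax⟩ := exists_maximal_isOrientedPath hD (fun _ => true) hB
  refine ⟨v ℓ, hv.1 ℓ (by omega), true,
    (ncard_le_of_subset_image_Ico (v := v) (a := ℓ + 2 - n) (b := ℓ) ?_).trans_lt (by omega)⟩
  rintro x ⟨hx, harc⟩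
  obtain ⟨j, hj, rfl⟩ := hmax x hx harc
  refine ⟨j, ⟨?_, hj⟩, rfl⟩
  by_contra! hjn
  exact h (hv.hasLongCycle hj harc (by omega))

end LongCycles

section StrongComponents

def strongComponent (D : V → V → Prop) (r : V) : Set V := {u | Reaches D r u ∧ Reaches D u r}

lemma mem_strongComponent_self (r : V) : r ∈ strongComponent D r := ⟨.refl r, .refl r⟩

lemma strongComponent_eq_of_mem {r u : V} (h : u ∈ strongComponent D r) :
    strongComponent D u = strongComponent D r :=
  Set.ext fun _ => ⟨fun hx => ⟨h.1.trans hx.1, hx.2.trans h.2⟩,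
    fun hx => ⟨h.2.trans hx.1, hx.2.trans h.1⟩⟩

lemma mem_strongComponent_of_closedWalk {p : ℕ → V} {n t : ℕ} (hpn : p n = p 0)
    (harc : ∀ i < n, D (p i) (p (i + 1))) (ht : t ≤ n) : p t ∈ strongComponent D (p 0) :=
  ⟨⟨_, hasWalk_of_seq (Nat.zero_le t) fun i _ hi => harc i (by omega)⟩,
    ⟨_, hpn ▸ hasWalk_of_seq ht fun i _ hi => harc i hi⟩⟩

lemma dicolorableOn_univ_of_forall_strongComponent {k : ℕ}
    (h : ∀ r, DicolorableOn D k (strongComponent D r)) : DicolorableOn D k Set.univ := by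
  rcases isEmpty_or_nonempty V with hV | hV
  · exact ⟨isEmptyElim, fun _ ⟨_, p, _⟩ => isEmptyElim (p 0)⟩
  choose c hc using h
  let rep (v : V) : V := Classical.epsilon fun r => strongComponent D r = strongComponent D v
  have hrep (v : V) : strongComponent D (rep v) = strongComponent D v :=
    Classical.epsilon_spec (p := fun r => strongComponent D r = strongComponent D v) ⟨v, rfl⟩
  refine ⟨fun v => c (rep v) v, fun i ⟨n, p, hn, hpn, harc, hcol⟩ => ?_⟩
  have hcomp (t : ℕ) (ht : t ≤ n) : strongComponent D (p t) = strongComponent D (p 0) :=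
    strongComponent_eq_of_mem (mem_strongComponent_of_closedWalk hpn harc ht)
  have hrep_eq (t : ℕ) (ht : t ≤ n) : rep (p t) = rep (p 0) := by simp only [rep, hcomp t ht]
  refine hc (rep (p 0)) i ⟨n, p, hn, hpn, harc, fun t ht => ⟨?_, ?_⟩⟩
  · rw [hrep, ← hcomp t ht]
    exact mem_strongComponent_self _
  · rw [← hrep_eq t ht]
    exact (hcol t ht).2

lemma apply_eq_of_closedWalk_antitone {p : ℕ → V} {n : ℕ} {f : V → ℕ} (hpn : p n = p 0)
    (hf : ∀ t < n, f (p (t + 1)) ≤ f (p t)) {t : ℕ} (ht : t ≤ n) : f (p t) = f (p 0) := by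
  have hanti (s t : ℕ) (hst : s ≤ t) (htn : t ≤ n) : f (p t) ≤ f (p s) := by
    induction t, hst using Nat.le_induction with
    | base => rfl
    | succ t _ ih => exact (hf t htn).trans (ih (by omega))
  have h1 := hanti 0 t (Nat.zero_le t) ht
  have h2 := hanti t n ht le_rfl
  rw [hpn] at h2
  omega

/-- Colour by the parity of the distance from `r` together with a colour inside the level: an
arc raises the distance by at most one, so a cycle in a single parity class stays in one level. -/
lemma DicolorableOn.strongComponent_of_levels {k : ℕ} {r : V}
    (h : ∀ j, DicolorableOn D k {v | v ∈ strongComponent D r ∧ arcDist D r v = j}) :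
    DicolorableOn D (2 * k) (strongComponent D r) := by
  choose c hc using h
  refine ⟨fun v => finProdFinEquiv
      (⟨arcDist D r v % 2, Nat.mod_lt _ two_pos⟩, c (arcDist D r v) v),
    fun i ⟨n, p, hn, hpn, harc, hcol⟩ => ?_⟩
  have hsame (t : ℕ) (ht : t ≤ n) : arcDist D r (p t) % 2 = arcDist D r (p 0) % 2 ∧
      c (arcDist D r (p t)) (p t) = c (arcDist D r (p 0)) (p 0) := by
    have := finProdFinEquiv.injective ((hcol t ht).2.trans (hcol 0 (Nat.zero_le n)).2.symm)
    simpa [Prod.ext_iff, Fin.ext_iff] using this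
  have hlevel (t : ℕ) (ht : t ≤ n) : arcDist D r (p t) = arcDist D r (p 0) := by
    refine apply_eq_of_closedWalk_antitone hpn (fun s hs => ?_) ht
    have := arcDist_le_succ (hcol s hs.le).1.1 (harc s hs)
    have := (hsame s hs.le).1
    have := (hsame (s + 1) hs).1
    omega
  refine hc (arcDist D r (p 0)) (c (arcDist D r (p 0)) (p 0))
    ⟨n, p, hn, hpn, harc, fun t ht => ⟨⟨(hcol t ht).1, hlevel t ht⟩, ?_⟩⟩
  have := (hsame t ht).2
  rwa [hlevel t ht] at this

end StrongComponents

section Forks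

structure Fork (D : V → V → Prop) (f : V → ℕ) (a b : V) where
  len : ℕ
  left : ℕ → V
  right : ℕ → V
  len_pos : 0 < len
  left_zero_eq_right_zero : left 0 = right 0
  left_len : left len = a
  right_len : right len = b
  left_arc : ∀ t < len, D (left t) (left (t + 1))
  right_arc : ∀ t < len, D (right t) (right (t + 1))
  left_level : ∀ t ≤ len, f (left t) = f (left 0) + t
  right_level : ∀ t ≤ len, f (right t) = f (left 0) + t
  left_ne_right : ∀ t, 0 < t → t < len → left t ≠ right t

/-- Two shortest paths from `r` to `a` and to `b` fork at the last vertex they share. -/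
lemma nonempty_fork {r a b : V} (hab : a ≠ b) (ha : Reaches D r a) (hb : Reaches D r b)
    (hd : arcDist D r a = arcDist D r b) : Nonempty (Fork D (arcDist D r) a b) := by
  classical
  obtain ⟨qa, hqa0, hqaj, hqa⟩ := hasWalk_arcDist ha
  set j := arcDist D r a
  obtain ⟨qb, hqb0, hqbj, hqb⟩ : HasWalk D r b j := hd ▸ hasWalk_arcDist hb
  have hla (t : ℕ) (ht : t ≤ j) : arcDist D r (qa t) = t :=
    arcDist_of_geodesic hqa0 hqa (by rw [hqaj]) ht
  have hlb (t : ℕ) (ht : t ≤ j) : arcDist D r (qb t) = t :=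
    arcDist_of_geodesic hqb0 hqb (by rw [hqbj, hd]) ht
  set i := Nat.findGreatest (fun t => qa t = qb t) j
  have hi : qa i = qb i :=
    Nat.findGreatest_spec (P := fun t => qa t = qb t) (Nat.zero_le j) (hqa0.trans hqb0.symm)
  have hij : i < j := (Nat.findGreatest_le j).lt_of_ne fun h => hab (by
    rw [← hqaj, ← hqbj, ← h, hi])
  refine ⟨⟨j - i, fun t => qa (i + t), fun t => qb (i + t), by omega, hi, ?_, ?_,
    fun t ht => ?_, fun t ht => ?_, fun t ht => ?_, fun t ht => ?_, fun t ht0 ht => ?_⟩⟩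
  · simp only [Nat.add_sub_cancel' hij.le, hqaj]
  · simp only [Nat.add_sub_cancel' hij.le, hqbj]
  · simpa only [← Nat.add_assoc] using hqa (i + t) (by omega)
  · simpa only [← Nat.add_assoc] using hqb (i + t) (by omega)
  · simp only [hla _ (show i + t ≤ j by omega), Nat.add_zero, hla i hij.le]
  · simp only [hlb _ (show i + t ≤ j by omega), Nat.add_zero, hla i hij.le]
  · intro he
    have := Nat.le_findGreatest (P := fun t => qa t = qb t) (show i + t ≤ j by omega) he
    omega

end Forks

section Subdivisions

lemma IsSubdivision.comap {U U' : Type*} {F : U → U → Prop} {F' : U' → U' → Prop}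
    (e : U' ↪ U) (he : ∀ a b, F' a b → F (e a) (e b)) (h : IsSubdivision F D) :
    IsSubdivision F' D := by
  obtain ⟨emb, len, p, hemb, hlen, hends, harc, hinj, hint, hdisj⟩ := h
  refine ⟨emb ∘ e, fun a b => len (e a) (e b), fun a b => p (e a) (e b), hemb.comp e.injective,
    fun a b h => hlen _ _ (he a b h), fun a b h => hends _ _ (he a b h),
    fun a b h => harc _ _ (he a b h), fun a b h => hinj _ _ (he a b h),
    fun a b h t ht0 ht x => hint _ _ (he a b h) t ht0 ht (e x),
    fun a b h a' b' h' hne => hdisj _ _ (he a b h) _ _ (he a' b' h') fun heq => hne ?_⟩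
  simp only [Prod.mk.injEq, e.injective.eq_iff] at heq ⊢
  exact heq

/-- Only the arcs leaving `u₀` are subdivided. -/
lemma isSubdivision_of_star {U : Type*} {F : U → U → Prop} (hD : Irreflexive D) (u₀ : U)
    {emb : U → V} (hemb : Function.Injective emb)
    (hF : ∀ u v, F u v → u ≠ u₀ → D (emb u) (emb v))
    (len : U → ℕ) (P : U → ℕ → V) (hlen : ∀ v, F u₀ v → 0 < len v)
    (hstart : ∀ v, F u₀ v → P v 0 = emb u₀) (hend : ∀ v, F u₀ v → P v (len v) = emb v)
    (harc : ∀ v, F u₀ v → ∀ t < len v, D (P v t) (P v (t + 1)))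
    (hinj : ∀ v, F u₀ v → Set.InjOn (P v) (Set.Iic (len v)))
    (hint : ∀ v, F u₀ v → ∀ t, 0 < t → t < len v → ∀ x, P v t ≠ emb x)
    (hdisj : ∀ v v', F u₀ v → F u₀ v' → v ≠ v' →
      ∀ t, 0 < t → t < len v → ∀ t', 0 < t' → t' < len v' → P v t ≠ P v' t') :
    IsSubdivision F D := by
  classical
  refine ⟨emb, fun u v => if u = u₀ then len v else 1,
    fun u v t => if u = u₀ then P v t else if t = 0 then emb u else emb v, hemb,
    fun u v huv => ?_, fun u v huv => ?_, fun u v huv t ht => ?_, fun u v huv t ht t' ht' he => ?_,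
    fun u v huv t ht0 ht x => ?_, fun u v huv u' v' huv' hne t ht0 ht t' ht0' ht' => ?_⟩
  all_goals rcases eq_or_ne u u₀ with rfl | hu
  · simpa [Nat.one_le_iff_ne_zero] using (hlen v huv).ne'
  · simp [hu]
  · simpa using ⟨hstart v huv, hend v huv⟩
  · simp [hu]
  · simpa using harc v huv t (by simpa using ht)
  · simpa [hu, show t = 0 by simp [hu] at ht; omega] using hF u v huv hu
  · simp only [↓reduceIte] at ht ht' he
    exact hinj v huv ht ht' he
  · simp only [hu, ↓reduceIte] at ht ht' he
    have hne : emb u ≠ emb v := fun h => hD _ (h ▸ hF u v huv hu)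
    interval_cases t <;> interval_cases t' <;> simp_all
  · simpa using hint v huv t ht0 (by simpa using ht) x
  · simp [hu] at ht
    omega
  · rcases eq_or_ne u' u with rfl | hu'
    · simpa using hdisj v v' huv huv' (by rintro rfl; simp at hne) t ht0 (by simpa using ht) t'
        ht0' (by simpa using ht')
    · simp [hu'] at ht'
      omega
  · simp [hu] at ht
    omega

/-- Paths climbing one level of `f` per arc, from the level of `emb u₀` to the common level of
the other branch vertices, can only meet at equal heights. -/
lemma isSubdivision_of_levelled_star {U : Type*} {F : U → U → Prop} (hD : Irreflexive D)
    (u₀ : U) {emb : U → V} (hemb : ∀ u v, u ≠ u₀ → v ≠ u₀ → emb u = emb v → u = v)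
    (hF : ∀ u v, F u v → u ≠ u₀ → D (emb u) (emb v)) {ℓ : ℕ} (hℓ : 0 < ℓ) (P : U → ℕ → V)
    {f : V → ℕ} (hlevel : ∀ u ≠ u₀, f (emb u) = f (emb u₀) + ℓ)
    (hP_level : ∀ v, F u₀ v → ∀ t ≤ ℓ, f (P v t) = f (emb u₀) + t)
    (hstart : ∀ v, F u₀ v → P v 0 = emb u₀) (hend : ∀ v, F u₀ v → P v ℓ = emb v)
    (harc : ∀ v, F u₀ v → ∀ t < ℓ, D (P v t) (P v (t + 1)))
    (hdisj : ∀ v v', F u₀ v → F u₀ v' → v ≠ v' → ∀ t, 0 < t → t < ℓ → P v t ≠ P v' t) :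
    IsSubdivision F D := by
  have hemb_level (u : U) : f (emb u) = f (emb u₀) ∨ f (emb u) = f (emb u₀) + ℓ := by
    by_cases hu : u = u₀
    exacts [Or.inl (by rw [hu]), Or.inr (hlevel u hu)]
  refine isSubdivision_of_star hD u₀ (fun u v he => ?_) hF (fun _ => ℓ) P (fun _ _ => hℓ)
    hstart hend harc (fun v hv s hs t ht hst => ?_) (fun v hv t ht0 ht x hx => ?_)
    (fun v v' hv hv' hne t ht0 ht t' ht0' ht' he => ?_)
  · by_cases hu : u = u₀ <;> by_cases hv : v = u₀
    · rw [hu, hv]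
    · have := hlevel v hv
      rw [← he, hu] at this
      omega
    · have := hlevel u hu
      rw [he, hv] at this
      omega
    · exact hemb u v hu hv he
  · have := congrArg f hst
    rw [hP_level v hv s hs, hP_level v hv t ht] at this
    omega
  · have := congrArg f hx
    rw [hP_level v hv t ht.le] at this
    rcases hemb_level x with h | h <;> omega
  · have := congrArg f he
    rw [hP_level v hv t ht.le, hP_level v' hv' t' ht'.le] at this
    obtain rfl : t = t' := by omega
    exact hdisj v v' hv hv' hne t ht0 ht he

lemma injOn_Ioc_of_closed {q : ℕ → V} {L : ℕ} (hqL : q L = q 0)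
    (hq : Set.InjOn q (Set.Iio L)) : Set.InjOn q (Set.Ioc 0 L) := by
  intro a ha b hb hab
  simp only [Set.mem_Ioc] at ha hb
  rcases ha.2.lt_or_eq with ha' | rfl <;> rcases hb.2.lt_or_eq with hb' | rfl
  · exact hq ha' hb' hab
  · have := hq ha' (show 0 < b by omega) (hab.trans hqL)
    omega
  · have := hq (show 0 < a by omega) hb' (hqL.symm.trans hab)
    omega
  · rfl

lemma isSubdivision_directedCycle (hD : Irreflexive D) {n : ℕ} (hn : 2 ≤ n)
    (h : HasLongCycle D n) : IsSubdivision (orientedCycle n fun _ => true) D := by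
  obtain ⟨L, q, hnL, hqL, harc, hinj⟩ := h
  have hF (a b : Fin n) : orientedCycle n (fun _ => true) a b ↔ (a.val + 1) % n = b.val := by
    simp [orientedCycle]
  have hlast (v : Fin n) (hv : orientedCycle n (fun _ => true) ⟨n - 1, by omega⟩ v) :
      v.val = 0 := by
    rwa [hF, show n - 1 + 1 = n by omega, Nat.mod_self, eq_comm] at hv
  refine isSubdivision_of_star hD ⟨n - 1, by omega⟩ (emb := fun a => q a.val)
    (fun a b hab => Fin.ext (hinj (Set.mem_Iio.mpr (a.2.trans_le hnL))
      (Set.mem_Iio.mpr (b.2.trans_le hnL)) hab)) (fun a b hab ha => ?_)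
    (fun _ => L - (n - 1)) (fun _ t => q (n - 1 + t)) (fun _ _ => by omega) (fun _ _ => rfl)
    (fun v hv => ?_) (fun v _ t ht => ?_) (fun v _ s hs t ht hst => ?_)
    (fun v _ t ht0 ht x hx => ?_) (fun v v' hv hv' hne => absurd ?_ hne)
  · have ha' : a.val + 1 < n := by
      have := a.2
      have : a.val ≠ n - 1 := fun h => ha (Fin.ext h)
      omega
    rw [hF, Nat.mod_eq_of_lt ha'] at hab
    rw [← hab]
    exact harc _ (by omega)
  · simp only [hlast v hv, Nat.add_sub_cancel' (show n - 1 ≤ L by omega), hqL]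
  · simpa only [← Nat.add_assoc] using harc (n - 1 + t) (by omega)
  · have hs' := Set.mem_Iic.mp hs
    have ht' := Set.mem_Iic.mp ht
    have := injOn_Ioc_of_closed hqL hinj (Set.mem_Ioc.mpr (show 0 < n - 1 + s ∧ n - 1 + s ≤ L by
      omega)) (Set.mem_Ioc.mpr (show 0 < n - 1 + t ∧ n - 1 + t ≤ L by omega)) hst
    omega
  · have := hinj (show n - 1 + t < L by omega) (x.2.trans_le hnL) hx
    have := x.2
    omega
  · exact Fin.ext ((hlast v hv).trans (hlast v' hv').symm)

lemma orientedCycle_iff {n : ℕ} [NeZero n] {σ : ℕ → Bool} {a b : Fin n} :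
    orientedCycle n σ a b ↔ (a + 1 = b ∧ σ a = true) ∨ (b + 1 = a ∧ σ b = false) := by
  simp only [orientedCycle, Fin.ext_iff, Fin.val_add, Fin.val_one', Nat.add_mod_mod]

lemma isSubdivision_of_forall_eq (hD : Irreflexive D) {n : ℕ} (hn : 2 ≤ n) {σ : ℕ → Bool}
    {b : Bool} (hσ : ∀ j < n, σ j = b) (h : HasLongCycle D n) :
    IsSubdivision (orientedCycle n σ) D := by
  have : NeZero n := ⟨by omega⟩
  have hσ' (a : Fin n) : σ a = b := hσ a a.2
  cases b
  · refine (isSubdivision_directedCycle hD hn h).comap ⟨Neg.neg, neg_injective⟩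
      fun a c hac => ?_
    simp only [orientedCycle_iff, hσ', Bool.false_eq_true, and_false, and_true, false_or]
      at hac ⊢
    simp only [Function.Embedding.coeFn_mk, ← hac]
    left
    abel
  · refine (isSubdivision_directedCycle hD hn h).comap (.refl _) fun a c hac => ?_
    simp only [orientedCycle_iff, hσ', Bool.true_eq_false, and_false, and_true, or_false]
      at hac ⊢
    exact hac

lemma IsSubdivision.of_rotate {n : ℕ} [NeZero n] {σ : ℕ → Bool} (s : Fin n)
    (h : IsSubdivision (orientedCycle n fun j => σ ((j + s) % n)) D) :
    IsSubdivision (orientedCycle n σ) D := by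
  refine h.comap (Equiv.subRight s).toEmbedding fun a b hab => ?_
  have hval (c : Fin n) : ((c - s).val + s.val) % n = c.val := by
    rw [← Fin.val_add, sub_add_cancel]
  simp only [Equiv.coe_toEmbedding, Equiv.subRight_apply, orientedCycle_iff, hval,
    sub_add_eq_add_sub, sub_left_inj]
  rwa [orientedCycle_iff] at hab

open Fin.NatCast in
lemma exists_twoSource {n : ℕ} [NeZero n] {σ : ℕ → Bool} (h : ¬∃ b, ∀ j < n, σ j = b) :
    ∃ s : Fin n, σ s = true ∧ σ (s - 1 : Fin n) = false := by
  by_contra! hs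
  obtain ⟨l, hl⟩ : ∃ l : Fin n, σ l = true := by
    by_contra! hl
    exact h ⟨false, fun j hj => by simpa using hl ⟨j, hj⟩⟩
  have hall (t : ℕ) : σ (l - (t : Fin n)).val = true := by
    induction t with
    | zero => simpa using hl
    | succ t ih => simpa [sub_add_eq_sub_sub] using hs _ ih
  exact h ⟨true, fun j hj => by simpa using hall (l - ⟨j, hj⟩).val⟩

end Subdivisions

section TwoSource

variable {n : ℕ} {σ : ℕ → Bool}

lemma orientedCycle_cases_of_twoSource (hσ0 : σ 0 = true) (hσ1 : σ (n - 1) = false)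
    {a b : Fin n} (h : orientedCycle n σ a b) :
    (a.val = 0 ∧ (b.val = 1 ∨ b.val = n - 1)) ∨ ∃ i, i + 2 < n ∧
      ((a.val = i + 1 ∧ b.val = i + 2 ∧ σ (i + 1) = true) ∨
        (a.val = i + 2 ∧ b.val = i + 1 ∧ σ (i + 1) = false)) := by
  have ha := a.2
  have hb := b.2
  rcases h with ⟨hab, hσa⟩ | ⟨hba, hσb⟩
  · rcases (show a.val + 1 < n ∨ a.val = n - 1 by omega) with h | h
    · rw [Nat.mod_eq_of_lt h] at hab
      rcases Nat.eq_zero_or_pos a.val with h0 | h0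
      · exact Or.inl ⟨h0, Or.inl (by omega)⟩
      · refine Or.inr ⟨a.val - 1, by omega, Or.inl ⟨by omega, by omega, ?_⟩⟩
        rwa [Nat.sub_add_cancel h0]
    · rw [h, hσ1] at hσa
      exact absurd hσa Bool.false_ne_true
  · rcases (show b.val + 1 < n ∨ b.val = n - 1 by omega) with h | h
    · rw [Nat.mod_eq_of_lt h] at hba
      rcases Nat.eq_zero_or_pos b.val with h0 | h0
      · rw [h0, hσ0] at hσb
        exact absurd hσb Bool.false_ne_true.symm
      · refine Or.inr ⟨b.val - 1, by omega, Or.inr ⟨by omega, by omega, ?_⟩⟩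
        rwa [Nat.sub_add_cancel h0]
    · rw [h, Nat.sub_add_cancel (by omega), Nat.mod_self] at hba
      exact Or.inl ⟨hba.symm, Or.inr h⟩

lemma IsOrientedPath.adj_of_orientedCycle (hσ0 : σ 0 = true) (hσ1 : σ (n - 1) = false)
    {A : Set V} {w : ℕ → V} (hw : IsOrientedPath D (fun t => σ (t + 1)) A (n - 1) w)
    {a b : Fin n} (hab : orientedCycle n σ a b) (ha : a.val ≠ 0) :
    b.val ≠ 0 ∧ D (w (a.val - 1)) (w (b.val - 1)) := by
  rcases orientedCycle_cases_of_twoSource hσ0 hσ1 hab with ⟨h, -⟩ | ⟨i, hi, h | h⟩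
  · exact absurd h ha
  · have := hw.2.2 i (by omega)
    simp only [h.2.2] at this
    simpa [h.1, h.2.1, orientArc] using this
  · have := hw.2.2 i (by omega)
    simp only [h.2.2] at this
    simpa [h.1, h.2.1, orientArc, flip] using this

/-- The two-source `0` goes to the fork point and the path `1, …, n - 1` of the cycle to `w`;
the two arcs at `0` become the two branches of the fork. -/
lemma isSubdivision_of_fork (hD : Irreflexive D) (hn : 3 ≤ n) (hσ0 : σ 0 = true)
    (hσ1 : σ (n - 1) = false) {A : Set V} {w : ℕ → V}
    (hw : IsOrientedPath D (fun t => σ (t + 1)) A (n - 1) w) {f : V → ℕ}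
    (hlevel : ∀ t < n - 1, f (w t) = f (w 0)) (φ : Fork D f (w 0) (w (n - 2))) :
    IsSubdivision (orientedCycle n σ) D := by
  have hout (v : Fin n) (hv : orientedCycle n σ ⟨0, by omega⟩ v) :
      v.val = 1 ∨ v.val = n - 1 := by
    rcases orientedCycle_cases_of_twoSource hσ0 hσ1 hv with ⟨-, h⟩ | ⟨i, -, h | h⟩
    exacts [h, absurd h.1 (by simp), absurd h.1 (by simp)]
  have hne0 {a : Fin n} (ha : a ≠ ⟨0, by omega⟩) : a.val ≠ 0 := fun h => ha (Fin.ext h)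
  let P (v : Fin n) : ℕ → V := if v.val = 1 then φ.left else φ.right
  refine isSubdivision_of_levelled_star hD ⟨0, by omega⟩
    (emb := fun a => if a.val = 0 then φ.left 0 else w (a.val - 1)) (fun a b ha hb hab => ?_)
    (fun a b hab ha => ?_) φ.len_pos P (f := f) (fun a ha => ?_) (fun v _ t ht => ?_)
    (fun v _ => ?_) (fun v hv => ?_) (fun v _ t ht => ?_) (fun v v' hv hv' hne t ht0 ht he => ?_)
  · simp only [hne0 ha, hne0 hb, ↓reduceIte] at hab
    have := hw.2.1 (show a.val - 1 < n - 1 by omega) (show b.val - 1 < n - 1 by omega) hab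
    exact Fin.ext (by have := hne0 ha; have := hne0 hb; omega)
  · have := hw.adj_of_orientedCycle hσ0 hσ1 hab (hne0 ha)
    simpa [hne0 ha, this.1] using this.2
  · have := φ.left_level _ le_rfl
    rw [φ.left_len] at this
    simpa [hne0 ha, hlevel _ (show a.val - 1 < n - 1 by omega)] using this
  · simp only [P, ↓reduceIte]
    split_ifs
    exacts [φ.left_level t ht, φ.right_level t ht]
  · simp only [P, ↓reduceIte]
    split_ifs
    exacts [rfl, φ.left_zero_eq_right_zero.symm]
  · rcases hout v hv with h | h
    · simp [P, h, φ.left_len]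
    · simp [P, h, φ.right_len, show n - 1 ≠ 1 by omega, show n - 1 ≠ 0 by omega,
        show n - 1 - 1 = n - 2 by omega]
  · simp only [P]
    split_ifs
    exacts [φ.left_arc t ht, φ.right_arc t ht]
  · have hvv' : v.val ≠ v'.val := fun h => hne (Fin.ext h)
    rcases hout v hv with h | h <;> rcases hout v' hv' with h' | h'
    · omega
    · simp only [P, h, h', show n - 1 ≠ 1 by omega, ↓reduceIte] at he
      exact φ.left_ne_right t ht0 ht he
    · simp only [P, h, h', show n - 1 ≠ 1 by omega, ↓reduceIte] at he
      exact φ.left_ne_right t ht0 ht he.symm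
    · omega

lemma isSubdivision_of_twoSource [Finite V] (hD : Irreflexive D) (hn : 3 ≤ n)
    (hσ0 : σ 0 = true) (hσ1 : σ (n - 1) = false) (hχ : 2 * n - 3 ≤ dichrom D) :
    IsSubdivision (orientedCycle n σ) D := by
  obtain ⟨r, j, w, hw⟩ : ∃ r j w, IsOrientedPath D (fun t => σ (t + 1))
      {x | x ∈ strongComponent D r ∧ arcDist D r x = j} (n - 1) w := by
    by_contra! h
    have := dichrom_le_of_dicolorableOn_univ <| dicolorableOn_univ_of_forall_strongComponent
      fun r => .strongComponent_of_levels fun j =>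
        dicolorableOn_of_forall_not_isOrientedPath hD (by omega) (h r j)
    omega
  have hw0 := hw.1 0 (by omega)
  have hw2 := hw.1 (n - 2) (by omega)
  have hne : w 0 ≠ w (n - 2) := fun he => by
    have := hw.2.1 (show 0 < n - 1 by omega) (show n - 2 < n - 1 by omega) he
    omega
  obtain ⟨φ⟩ := nonempty_fork hne hw0.1.1 hw2.1.1 (hw0.2.trans hw2.2.symm)
  exact isSubdivision_of_fork hD hn hσ0 hσ1 hw (fun t ht => (hw.1 t ht).2.trans hw0.2.symm) φ

end TwoSource

end

/-- For every oriented cycle `C` on `n ≥ 3` vertices, every (finite, loopless) digraph with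
dichromatic number at least `2n - 3` contains a subdivision of `C`. -/
theorem stmt19 (n : ℕ) (hn : 3 ≤ n) (σ : ℕ → Bool) :
    ∀ (V : Type) [Fintype V] (D : V → V → Prop), Irreflexive D →
      2 * n - 3 ≤ dichrom D → IsSubdivision (orientedCycle n σ) D := by
  intro V _ D hD hχ
  by_cases hconst : ∃ b, ∀ j < n, σ j = b
  · obtain ⟨b, hb⟩ := hconst
    refine isSubdivision_of_forall_eq hD (by omega) hb (by_contra fun h => ?_)
    have := dichrom_le_of_dicolorableOn_univ <|
      dicolorableOn_univ_of_not_hasLongCycle hD (by omega) h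
    omega
  · have : NeZero n := ⟨by omega⟩
    obtain ⟨s, hs, hs'⟩ := exists_twoSource hconst
    refine IsSubdivision.of_rotate s (isSubdivision_of_twoSource hD hn ?_ ?_ hχ)
    · simpa [Nat.mod_eq_of_lt s.2] using hs
    · rwa [Fin.val_sub, Fin.val_one', Nat.mod_eq_of_lt (show 1 < n by omega)] at hs'
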